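/- arXiv:2108.04782 — 4 statements merged into one kernel-verified Lean document; each statement's English description precedes it below -/
import Mathlib

section
/- A random variable X taking values in the bounded interval [a, b] almost surely and having mean zero is (b−a)/2-subgaussian. -/
open MeasureTheory Real

/-- `X` is `σ`-subgaussian: for all `λ`, `E[exp(λ X)] ≤ exp(λ² σ² / 2)`. -/
def IsSubgaussian {Ω : Type*} [MeasurableSpace Ω] (μ : Measure Ω) (X : Ω → ℝ) (σ : ℝ) : Prop :=
  ∀ l : ℝ, Integrable (fun ω => Real.exp (l * X ω)) μ ∧
    ∫ ω, Real.exp (l * X ω) ∂μ ≤ Real.exp (l ^ 2 * σ ^ 2 / 2)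

open ProbabilityTheory

theorem isSubgaussian_iff_hasSubgaussianMGF {Ω : Type*} [MeasurableSpace Ω] {μ : Measure Ω}
    {X : Ω → ℝ} {σ : ℝ} : IsSubgaussian μ X σ ↔ HasSubgaussianMGF X (‖σ‖₊ ^ 2) μ := by
  have hexp (t : ℝ) : rexp (t ^ 2 * σ ^ 2 / 2) = rexp ((‖σ‖₊ ^ 2 : NNReal) * t ^ 2 / 2) := by
    push_cast
    rw [Real.norm_eq_abs, sq_abs, mul_comm (t ^ 2)]
  exact ⟨fun h => ⟨fun t => (h t).1, fun t => (h t).2.trans_eq (hexp t)⟩,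
    fun h t => ⟨h.integrable_exp_mul t, (h.mgf_le t).trans_eq (hexp t).symm⟩⟩

/-- A mean-zero random variable bounded in `[a, b]` is `(b - a)/2`-subgaussian. -/
theorem bounded_mean_zero_subgaussian {Ω : Type*} [MeasurableSpace Ω]
    (μ : Measure Ω) [IsProbabilityMeasure μ] (X : Ω → ℝ) (a b : ℝ)
    (hX : Measurable X)
    (hbdd : ∀ᵐ ω ∂μ, a ≤ X ω ∧ X ω ≤ b)
    (hmean : ∫ ω, X ω ∂μ = 0) :
    IsSubgaussian μ X ((b - a) / 2) := by
  rw [isSubgaussian_iff_hasSubgaussianMGF, nnnorm_div, Real.nnnorm_ofNat]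
  exact hasSubgaussianMGF_of_mem_Icc_of_integral_eq_zero hX.aemeasurable hbdd hmean
end

section
/- Bretagnolle–Huber inequality: for any two probability measures P and Q on a common measurable space and any event A, P(A) + Q(Aᶜ) ≥ (1/2)·exp(−KL(P, Q)). -/
open MeasureTheory Real Classical

/-- KL divergence with value `⊤` when `P` is not absolutely continuous w.r.t. `Q`
(or the log-likelihood ratio is not integrable). -/
noncomputable def klDiv' {Ω : Type*} [MeasurableSpace Ω] (P Q : Measure Ω) : ENNReal :=
  if P ≪ Q ∧ Integrable (fun ω => Real.log (P.rnDeriv Q ω).toReal) P then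
    ENNReal.ofReal (∫ ω, Real.log (P.rnDeriv Q ω).toReal ∂P)
  else ⊤

/-!
Write `f = dP/dQ`. Jensen's inequality for `exp` gives `exp (-KL(P, Q) / 2) ≤ ∫ √f dQ`. Since
`√f = √(min f 1 * max f 1)`, Cauchy–Schwarz bounds the square of the right-hand side by
`(∫ min f 1 dQ) * (∫ max f 1 dQ)`; the first factor is at most `P A + Q Aᶜ` for every event `A`
(use `f` on `A` and `1` on `Aᶜ`), the second at most `∫ (f + 1) dQ ≤ 2`.
-/

lemma mul_exp_neg_log_div_two {x : ℝ} (hx : 0 ≤ x) : x * exp (-log x / 2) = √x := by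
  rcases hx.eq_or_lt with rfl | hx
  · simp
  · rw [neg_div, exp_neg, exp_half, exp_log hx, ← div_eq_mul_inv, div_sqrt]

lemma sq_integral_sqrt_mul_le {α : Type*} [MeasurableSpace α] {μ : Measure α} {g h : α → ℝ}
    (hg : 0 ≤ g) (hh : 0 ≤ h) (hgi : Integrable g μ) (hhi : Integrable h μ) :
    (∫ x, √(g x * h x) ∂μ) ^ 2 ≤ (∫ x, g x ∂μ) * ∫ x, h x ∂μ := by
  have memLp_sqrt : ∀ {u : α → ℝ}, 0 ≤ u → Integrable u μ →
      MemLp (fun x => √(u x)) (ENNReal.ofReal 2) μ := fun hu hui => by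
    rw [ENNReal.ofReal_ofNat, memLp_two_iff_integrable_sq hui.aemeasurable.sqrt.aestronglyMeasurable]
    exact hui.congr (.of_forall fun x => (sq_sqrt (hu x)).symm)
  have holder := integral_mul_le_Lp_mul_Lq_of_nonneg HolderConjugate.two_two
    (.of_forall fun x => sqrt_nonneg (g x)) (.of_forall fun x => sqrt_nonneg (h x))
    (memLp_sqrt hg hgi) (memLp_sqrt hh hhi)
  simp only [rpow_two, sq_sqrt (hg _), sq_sqrt (hh _), ← sqrt_eq_rpow, ← sqrt_mul (hg _)] at holder
  rw [← sqrt_mul (integral_nonneg hg)] at holder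
  exact (le_sqrt (integral_nonneg fun x => sqrt_nonneg _)
    (mul_nonneg (integral_nonneg hg) (integral_nonneg hh))).1 holder

section rnDeriv

variable {Ω : Type*} [MeasurableSpace Ω] {P Q : Measure Ω}

lemma integrable_sqrt_toReal_rnDeriv [IsFiniteMeasure P] [IsFiniteMeasure Q] :
    Integrable (fun ω => √(P.rnDeriv Q ω).toReal) Q := by
  refine ((Measure.integrable_toReal_rnDeriv (μ := P)).add (integrable_const 1)).mono'
    (Measure.measurable_rnDeriv P Q).ennreal_toReal.sqrt.aestronglyMeasurable (.of_forall fun ω => ?_)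
  have hsq := sq_sqrt (P.rnDeriv Q ω).toReal_nonneg
  rw [norm_of_nonneg (sqrt_nonneg _), Pi.add_apply]
  nlinarith [sqrt_nonneg (P.rnDeriv Q ω).toReal]

lemma exp_neg_integral_log_rnDeriv_div_two_le [IsProbabilityMeasure P] [IsFiniteMeasure Q]
    (hPQ : P ≪ Q) (hlog : Integrable (fun ω => log (P.rnDeriv Q ω).toReal) P) :
    exp (-(∫ ω, log (P.rnDeriv Q ω).toReal ∂P) / 2) ≤ ∫ ω, √(P.rnDeriv Q ω).toReal ∂Q := by
  have change_of_measure : ∀ ω, (P.rnDeriv Q ω).toReal • exp (-log (P.rnDeriv Q ω).toReal / 2)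
      = √(P.rnDeriv Q ω).toReal := fun ω => mul_exp_neg_log_div_two ENNReal.toReal_nonneg
  have hexp : Integrable (fun ω => exp (-log (P.rnDeriv Q ω).toReal / 2)) P := by
    rw [← integrable_rnDeriv_smul_iff hPQ]
    simpa only [change_of_measure] using integrable_sqrt_toReal_rnDeriv
  calc exp (-(∫ ω, log (P.rnDeriv Q ω).toReal ∂P) / 2)
      = exp (∫ ω, -log (P.rnDeriv Q ω).toReal / 2 ∂P) := by
        rw [integral_div, integral_neg]
    _ ≤ ∫ ω, exp (-log (P.rnDeriv Q ω).toReal / 2) ∂P :=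
        convexOn_exp.map_integral_le continuous_exp.continuousOn isClosed_univ
          (.of_forall fun _ => Set.mem_univ _) (hlog.neg.div_const 2) hexp
    _ = ∫ ω, √(P.rnDeriv Q ω).toReal ∂Q := by
        simp only [← integral_rnDeriv_smul hPQ, change_of_measure]

lemma integrable_min_toReal_rnDeriv_one [IsFiniteMeasure Q] :
    Integrable (fun ω => min (P.rnDeriv Q ω).toReal 1) Q :=
  (integrable_const 1).mono'
    ((Measure.measurable_rnDeriv P Q).ennreal_toReal.min measurable_const).aestronglyMeasurable
    (.of_forall fun _ => by
      rw [norm_of_nonneg (le_min ENNReal.toReal_nonneg zero_le_one)]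
      exact min_le_right _ _)

lemma max_toReal_rnDeriv_one_le (ω : Ω) :
    max (P.rnDeriv Q ω).toReal 1 ≤ (P.rnDeriv Q ω).toReal + 1 :=
  max_le (le_add_of_nonneg_right zero_le_one) (le_add_of_nonneg_left ENNReal.toReal_nonneg)

lemma integrable_max_toReal_rnDeriv_one [IsFiniteMeasure P] [IsFiniteMeasure Q] :
    Integrable (fun ω => max (P.rnDeriv Q ω).toReal 1) Q :=
  (Measure.integrable_toReal_rnDeriv.add (integrable_const 1)).mono'
    ((Measure.measurable_rnDeriv P Q).ennreal_toReal.max measurable_const).aestronglyMeasurable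
    (.of_forall fun ω => by
      rw [norm_of_nonneg (zero_le_one.trans (le_max_right _ _))]
      exact max_toReal_rnDeriv_one_le ω)

lemma integral_min_toReal_rnDeriv_one_le [IsFiniteMeasure P] [IsFiniteMeasure Q] {A : Set Ω}
    (hA : MeasurableSet A) :
    ∫ ω, min (P.rnDeriv Q ω).toReal 1 ∂Q ≤ P.real A + Q.real Aᶜ := by
  have hmin := integrable_min_toReal_rnDeriv_one (P := P) (Q := Q)
  rw [← integral_add_compl hA hmin]
  gcongr
  · calc ∫ ω in A, min (P.rnDeriv Q ω).toReal 1 ∂Q ≤ ∫ ω in A, (P.rnDeriv Q ω).toReal ∂Q :=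
          setIntegral_mono hmin.integrableOn Measure.integrable_toReal_rnDeriv.integrableOn
            fun _ => min_le_left _ _
      _ ≤ P.real A := Measure.setIntegral_toReal_rnDeriv_le (measure_ne_top P A)
  · calc ∫ ω in Aᶜ, min (P.rnDeriv Q ω).toReal 1 ∂Q ≤ ∫ ω in Aᶜ, 1 ∂Q :=
          setIntegral_mono hmin.integrableOn (integrable_const 1).integrableOn
            fun _ => min_le_right _ _
      _ = Q.real Aᶜ := by simp

lemma integral_max_toReal_rnDeriv_one_le [IsFiniteMeasure P] [IsFiniteMeasure Q] :
    ∫ ω, max (P.rnDeriv Q ω).toReal 1 ∂Q ≤ P.real Set.univ + Q.real Set.univ :=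
  calc ∫ ω, max (P.rnDeriv Q ω).toReal 1 ∂Q ≤ ∫ ω, (P.rnDeriv Q ω).toReal + 1 ∂Q :=
        integral_mono integrable_max_toReal_rnDeriv_one
          (Measure.integrable_toReal_rnDeriv.add (integrable_const 1)) max_toReal_rnDeriv_one_le
    _ ≤ P.real Set.univ + Q.real Set.univ := by
        rw [integral_add Measure.integrable_toReal_rnDeriv (integrable_const 1), integral_const,
          ← setIntegral_univ]
        simpa using Measure.setIntegral_toReal_rnDeriv_le (measure_ne_top P Set.univ)

lemma exp_neg_integral_log_rnDeriv_le [IsProbabilityMeasure P] [IsProbabilityMeasure Q] (hPQ : P ≪ Q)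
    (hlog : Integrable (fun ω => log (P.rnDeriv Q ω).toReal) P) {A : Set Ω} (hA : MeasurableSet A) :
    exp (-∫ ω, log (P.rnDeriv Q ω).toReal ∂P) ≤ 2 * (P.real A + Q.real Aᶜ) := by
  have hsqrt : ∀ ω, √(P.rnDeriv Q ω).toReal
      = √(min (P.rnDeriv Q ω).toReal 1 * max (P.rnDeriv Q ω).toReal 1) := fun ω => by
    rw [min_mul_max, mul_one]
  calc exp (-∫ ω, log (P.rnDeriv Q ω).toReal ∂P)
      = exp (-(∫ ω, log (P.rnDeriv Q ω).toReal ∂P) / 2) ^ 2 := by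
        rw [← exp_nat_mul]; ring_nf
    _ ≤ (∫ ω, √(min (P.rnDeriv Q ω).toReal 1 * max (P.rnDeriv Q ω).toReal 1) ∂Q) ^ 2 := by
        simp only [← hsqrt]
        gcongr
        exact exp_neg_integral_log_rnDeriv_div_two_le hPQ hlog
    _ ≤ (∫ ω, min (P.rnDeriv Q ω).toReal 1 ∂Q) * ∫ ω, max (P.rnDeriv Q ω).toReal 1 ∂Q :=
        sq_integral_sqrt_mul_le (fun _ => le_min ENNReal.toReal_nonneg zero_le_one)
          (fun _ => zero_le_one.trans (le_max_right _ _))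
          integrable_min_toReal_rnDeriv_one integrable_max_toReal_rnDeriv_one
    _ ≤ (P.real A + Q.real Aᶜ) * (P.real Set.univ + Q.real Set.univ) :=
        mul_le_mul (integral_min_toReal_rnDeriv_one_le hA) integral_max_toReal_rnDeriv_one_le
          (integral_nonneg fun _ => zero_le_one.trans (le_max_right _ _)) (by positivity)
    _ = 2 * (P.real A + Q.real Aᶜ) := by
        simp only [probReal_univ]; ring

end rnDeriv

/-- Bretagnolle–Huber inequality. -/
theorem bretagnolle_huber {Ω : Type*} [MeasurableSpace Ω]
    (P Q : Measure Ω) [IsProbabilityMeasure P] [IsProbabilityMeasure Q]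
    (A : Set Ω) (hA : MeasurableSet A) :
    (if klDiv' P Q = ⊤ then 0
      else ENNReal.ofReal ((1 / 2) * Real.exp (-(klDiv' P Q).toReal))) ≤ P A + Q Aᶜ := by
  by_cases hKL : P ≪ Q ∧ Integrable (fun ω => Real.log (P.rnDeriv Q ω).toReal) P
  · rw [klDiv', if_pos hKL, if_neg ENNReal.ofReal_ne_top, ENNReal.toReal_ofReal']
    refine ENNReal.ofReal_le_of_le_toReal ?_
    rw [ENNReal.toReal_add (measure_ne_top P A) (measure_ne_top Q Aᶜ), ← measureReal_def,
      ← measureReal_def]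
    set K := ∫ ω, log (P.rnDeriv Q ω).toReal ∂P
    have hbound : exp (-K) ≤ 2 * (P.real A + Q.real Aᶜ) :=
      exp_neg_integral_log_rnDeriv_le hKL.1 hKL.2 hA
    have hclip : exp (-max K 0) ≤ exp (-K) := exp_le_exp.2 (neg_le_neg (le_max_left K 0))
    linarith
  · simp [klDiv', hKL]
end

section
/- For the exponential-weights potential: if Ŝ_{T,a} = ∑_{t≤T} R̂_{t,a} with R̂_{t,a} ≤ 1 for all t, a, P_{t,a} = exp(η Ŝ_{t−1,a})/∑_{a'} exp(η Ŝ_{t−1,a'}), and η > 0, then for every action a, Ŝ_{T,a} − ∑_{t=1}^T ∑_{a'} P_{t,a'} R̂_{t,a'} ≤ log(K)/η + η ∑_{t=1}^T ∑_{a'} P_{t,a'} R̂_{t,a'}². -/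
open Finset

/-!
The log-potential `Φ t = log ∑ a, exp (η * S t a)` starts at `log K` and dominates `η * S T a`.
In round `t` it grows by `log ∑ a, P t a * exp (η * Rhat t a)`, which by `exp x ≤ 1 + x + x ^ 2`
(for `x ≤ 1`) and `log y ≤ y - 1` is at most
`η * ∑ a, P t a * Rhat t a + η ^ 2 * ∑ a, P t a * Rhat t a ^ 2`.
Telescoping over the rounds and dividing by `η` gives the inequality.
-/

namespace Real

theorem exp_le_one_add_add_sq {x : ℝ} (hx : x ≤ 1) : exp x ≤ 1 + x + x ^ 2 := by
  rcases le_or_gt (-1) x with hx' | hx'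
  · have := (abs_le.mp (abs_exp_sub_one_sub_id_le (abs_le.mpr ⟨hx', hx⟩))).2
    linarith
  · nlinarith [exp_le_one_iff.mpr (by linarith : x ≤ 0)]

variable {ι : Type*} [Fintype ι]

noncomputable def softmax (x : ι → ℝ) (i : ι) : ℝ := exp (x i) / ∑ j, exp (x j)

theorem sum_exp_pos [Nonempty ι] (x : ι → ℝ) : 0 < ∑ i, exp (x i) :=
  sum_pos (fun i _ => exp_pos (x i)) univ_nonempty

theorem softmax_pos [Nonempty ι] (x : ι → ℝ) (i : ι) : 0 < softmax x i :=
  div_pos (exp_pos _) (sum_exp_pos x)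

theorem sum_softmax [Nonempty ι] (x : ι → ℝ) : ∑ i, softmax x i = 1 := by
  simp only [softmax]
  rw [← sum_div, div_self (sum_exp_pos x).ne']

theorem sum_exp_add_eq_mul_sum_softmax [Nonempty ι] (x y : ι → ℝ) :
    ∑ i, exp (x i + y i) = (∑ i, exp (x i)) * ∑ i, softmax x i * exp (y i) := by
  rw [mul_sum]
  refine sum_congr rfl fun i _ => ?_
  rw [exp_add, softmax, ← mul_assoc, mul_div_cancel₀ _ (sum_exp_pos x).ne']

theorem sum_softmax_mul_exp_le [Nonempty ι] (x : ι → ℝ) {y : ι → ℝ} (hy : ∀ i, y i ≤ 1) :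
    ∑ i, softmax x i * exp (y i) ≤ 1 + ∑ i, softmax x i * (y i + y i ^ 2) :=
  calc ∑ i, softmax x i * exp (y i)
      ≤ ∑ i, softmax x i * (1 + y i + y i ^ 2) :=
        sum_le_sum fun i _ =>
          mul_le_mul_of_nonneg_left (exp_le_one_add_add_sq (hy i)) (softmax_pos x i).le
    _ = 1 + ∑ i, softmax x i * (y i + y i ^ 2) := by
        simp only [add_assoc, mul_add, mul_one, sum_add_distrib, sum_softmax]

theorem log_sum_exp_add_le [Nonempty ι] (x : ι → ℝ) {y : ι → ℝ} (hy : ∀ i, y i ≤ 1) :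
    log (∑ i, exp (x i + y i))
      ≤ log (∑ i, exp (x i)) + ∑ i, softmax x i * (y i + y i ^ 2) := by
  have hpos : 0 < ∑ i, softmax x i * exp (y i) :=
    sum_pos (fun i _ => mul_pos (softmax_pos x i) (exp_pos _)) univ_nonempty
  rw [sum_exp_add_eq_mul_sum_softmax, log_mul (sum_exp_pos x).ne' hpos.ne']
  linarith [log_le_sub_one_of_pos hpos, sum_softmax_mul_exp_le x hy]

theorem le_log_sum_exp (x : ι → ℝ) (i : ι) : x i ≤ log (∑ j, exp (x j)) := by
  have : Nonempty ι := ⟨i⟩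
  rw [le_log_iff_exp_le (sum_exp_pos x)]
  exact single_le_sum (f := fun j => exp (x j)) (fun j _ => (exp_pos _).le) (mem_univ i)

theorem log_sum_exp_sum_range_le [Nonempty ι] {y : ℕ → ι → ℝ} (hy : ∀ t i, y t i ≤ 1) (T : ℕ) :
    log (∑ i, exp (∑ t ∈ range T, y t i))
      ≤ log (Fintype.card ι)
        + ∑ t ∈ range T, ∑ i, softmax (fun j => ∑ s ∈ range t, y s j) i * (y t i + y t i ^ 2) := by
  induction T with
  | zero => simp
  | succ T ih =>
    simp only [sum_range_succ]
    linarith [log_sum_exp_add_le (fun j => ∑ s ∈ range T, y s j) (hy T)]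

end Real

theorem exp3_potential_inequality_general (K T : ℕ) (η : ℝ) (hη : 0 < η)
    (Rhat : ℕ → Fin K → ℝ) (hR : ∀ t a, η * Rhat t a ≤ 1)
    (S : ℕ → Fin K → ℝ) (hS : ∀ t a, S t a = ∑ s ∈ Finset.range t, Rhat s a)
    (P : ℕ → Fin K → ℝ)
    (hP : ∀ t a, P t a = Real.exp (η * S t a) / ∑ a', Real.exp (η * S t a')) :
    ∀ a : Fin K,
      S T a - ∑ t ∈ Finset.range T, ∑ a', P t a' * Rhat t a'
        ≤ Real.log K / η + η * ∑ t ∈ Finset.range T, ∑ a', P t a' * (Rhat t a') ^ 2 := by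
  intro a
  have : Nonempty (Fin K) := ⟨a⟩
  have hηS : ∀ t a, η * S t a = ∑ s ∈ range t, η * Rhat s a := fun t a => by rw [hS, mul_sum]
  have hP' : ∀ t, P t = Real.softmax (fun a => η * S t a) := fun t => by
    ext a; rw [hP, Real.softmax]
  have hpot := Real.log_sum_exp_sum_range_le hR T
  have hlow := Real.le_log_sum_exp (fun a => ∑ s ∈ range T, η * Rhat s a) a
  simp only [← hηS, ← hP', Fintype.card_fin] at hpot hlow
  have hgain : ∑ t ∈ range T, ∑ a', P t a' * (η * Rhat t a' + (η * Rhat t a') ^ 2)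
      = η * ∑ t ∈ range T, ∑ a', P t a' * Rhat t a'
        + η * (η * ∑ t ∈ range T, ∑ a', P t a' * Rhat t a' ^ 2) := by
    simp only [mul_sum, ← sum_add_distrib]
    exact sum_congr rfl fun t _ => sum_congr rfl fun a' _ => by ring
  have : S T a - ∑ t ∈ range T, ∑ a', P t a' * Rhat t a'
      - η * ∑ t ∈ range T, ∑ a', P t a' * Rhat t a' ^ 2 ≤ Real.log K / η := by
    rw [le_div_iff₀' hη, mul_sub, mul_sub]
    linarith
  linarith

/-- Key deterministic potential inequality in the EXP3 regret proof. -/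
theorem exp3_potential_inequality (K T : ℕ) (hK : 1 ≤ K) (η : ℝ) (hη : 0 < η)
    (Rhat : ℕ → Fin K → ℝ) (hR : ∀ t a, η * Rhat t a ≤ 1)
    (S : ℕ → Fin K → ℝ) (hS : ∀ t a, S t a = ∑ s ∈ Finset.range t, Rhat s a)
    (P : ℕ → Fin K → ℝ)
    (hP : ∀ t a, P t a = Real.exp (η * S t a) / ∑ a', Real.exp (η * S t a')) :
    ∀ a : Fin K,
      S T a - ∑ t ∈ Finset.range T, ∑ a', P t a' * Rhat t a'
        ≤ Real.log K / η + η * ∑ t ∈ Finset.range T, ∑ a', P t a' * (Rhat t a') ^ 2 :=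
  exp3_potential_inequality_general K T η hη Rhat hR S hS P hP
end

section
/- Elliptical potential lemma: let V₀ = λI_d with λ > 0 and V_t = V_{t−1} + a_t a_tᵀ for vectors a_t ∈ ℝ^d. Then ∑_{t=1}^{T} min(1, ‖a_t‖²_{V_{t−1}^{-1}}) ≤ 2 log(det(V_T)/det(V₀)), where ‖a‖²_M = aᵀ M a. -/
/-!
The matrix determinant lemma gives `det V_{t+1} = det V_t · (1 + x_t)` with
`x_t = a_tᵀ V_t⁻¹ a_t ≥ 0`, so `log (det V_T / det V_0)` telescopes into `∑ log (1 + x_t)`.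
Termwise, `min 1 x ≤ 2 x / (1 + x) ≤ 2 log (1 + x)` for `x ≥ 0`.
-/

open Finset Matrix

theorem Matrix.det_add_vecMulVec {m α : Type*} [Fintype m] [DecidableEq m] [CommRing α]
    {A : Matrix m m α} (hA : IsUnit A.det) (u v : m → α) :
    (A + vecMulVec u v).det = A.det * (1 + v ⬝ᵥ A⁻¹ *ᵥ u) := by
  rw [vecMulVec_eq Unit, det_add_replicateCol_mul_replicateRow hA, det_unique (n := Unit),
    dotProduct_mulVec]
  simp [Matrix.mul_apply, vecMul, dotProduct]

theorem Real.min_one_le_two_mul_log_one_add {x : ℝ} (hx : 0 ≤ x) :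
    min 1 x ≤ 2 * Real.log (1 + x) := by
  have h1x : 0 < 1 + x := by linarith
  have hlog : x / (1 + x) ≤ Real.log (1 + x) := by
    have := Real.one_sub_inv_le_log_of_pos h1x
    rwa [← one_div, one_sub_div h1x.ne', add_sub_cancel_left] at this
  have hmin : min 1 x ≤ 2 * (x / (1 + x)) := by
    rw [mul_div_assoc', le_div_iff₀ h1x]
    rcases le_total x 1 with h | h
    · rw [min_eq_right h]; nlinarith
    · rw [min_eq_left h]; linarith
  linarith

theorem sum_min_one_le_two_mul_log_div {f x : ℕ → ℝ} (hf : ∀ t, 0 < f t) (hx : ∀ t, 0 ≤ x t)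
    (hstep : ∀ t, f (t + 1) = f t * (1 + x t)) (T : ℕ) :
    ∑ t ∈ range T, min 1 (x t) ≤ 2 * Real.log (f T / f 0) := by
  induction T with
  | zero => simp
  | succ T ih =>
    have hlog : Real.log (f (T + 1) / f 0) = Real.log (f T / f 0) + Real.log (1 + x T) := by
      rw [hstep, mul_div_right_comm,
        Real.log_mul (div_pos (hf T) (hf 0)).ne' (by linarith [hx T])]
    rw [sum_range_succ, hlog]
    linarith [Real.min_one_le_two_mul_log_one_add (hx T)]

theorem Matrix.PosDef.smul_one_add_sum_vecMulVec {n : Type*} [Fintype n] [DecidableEq n]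
    {lam : ℝ} (hlam : 0 < lam) {ι : Type*} (s : Finset ι) (a : ι → n → ℝ) :
    (lam • (1 : Matrix n n ℝ) + ∑ i ∈ s, vecMulVec (a i) (a i)).PosDef :=
  (PosDef.one.smul hlam).add_posSemidef <|
    posSemidef_sum s fun i _ => by simpa using posSemidef_vecMulVec_self_star (a i)

/-- Elliptical potential lemma. -/
theorem elliptical_potential (d T : ℕ) (lam : ℝ) (hlam : 0 < lam)
    (a : ℕ → Fin d → ℝ) (V : ℕ → Matrix (Fin d) (Fin d) ℝ)
    (hV : ∀ t, V t = lam • (1 : Matrix (Fin d) (Fin d) ℝ) +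
      ∑ s ∈ Finset.range t, Matrix.vecMulVec (a s) (a s)) :
    ∑ t ∈ Finset.range T, min 1 (dotProduct (a t) ((V t)⁻¹.mulVec (a t)))
      ≤ 2 * Real.log ((V T).det / (V 0).det) := by
  have hpos : ∀ t, (V t).PosDef := fun t => hV t ▸ .smul_one_add_sum_vecMulVec hlam _ a
  refine sum_min_one_le_two_mul_log_div (fun t => (hpos t).det_pos)
    (fun t => by simpa using (hpos t).inv.posSemidef.dotProduct_mulVec_nonneg (a t))
    (fun t => ?_) T
  rw [hV (t + 1), sum_range_succ, ← add_assoc, ← hV t]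
  exact det_add_vecMulVec (hpos t).det_pos.ne'.isUnit (a t) (a t)
end
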